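/- arXiv:1912.04365 — 12 statements merged into one kernel-verified Lean document; each statement's English description precedes it below -/
import Mathlib

section
/- Let E be a real inner product space with inner product ⟪·,·⟫ and norm ‖·‖, let H : E → E be a self-adjoint bounded linear operator, let g, s ∈ E, and let εH > 0 and μ ≥ 0 be real numbers. Suppose that g + H s + (εH + μ)·s = 0 and that ⟪v, H v⟫ + (εH + μ)·‖v‖² ≥ 0 for every v ∈ E. Then −⟪g, s⟫ − (1/2)·⟪s, H s⟫ ≥ (1/2)·εH·‖s‖². -/
open RealInnerProductSpace

theorem real_inner_eq_of_add_add_smul_eq_zero {E : Type*} [NormedAddCommGroup E]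
    [InnerProductSpace ℝ E] {g w s : E} {c : ℝ} (h : g + w + c • s = 0) :
    ⟪g, s⟫ = -⟪s, w⟫ - c * ‖s‖ ^ 2 := by
  have hpair : ⟪g + w + c • s, s⟫ = 0 := by rw [h, inner_zero_left]
  rw [inner_add_left, inner_add_left, real_inner_smul_left, real_inner_comm s w,
    real_inner_self_eq_norm_sq] at hpair
  linarith

theorem exact_model_decrease_general {E : Type*} [NormedAddCommGroup E] [InnerProductSpace ℝ E]
    (H : E →L[ℝ] E)
    (g s : E) (εH μ : ℝ) (hμ : 0 ≤ μ)
    (hstat : g + H s + (εH + μ) • s = 0)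
    (hpsd : ∀ v : E, ⟪v, H v⟫ + (εH + μ) * ‖v‖ ^ 2 ≥ 0) :
    -⟪g, s⟫ - (1 / 2) * ⟪s, H s⟫ ≥ (1 / 2) * εH * ‖s‖ ^ 2 := by
  have hgs := real_inner_eq_of_add_add_smul_eq_zero hstat
  have hcurv := hpsd s
  have hμs : 0 ≤ μ * ‖s‖ ^ 2 := by positivity
  -- the reduction equals ½(⟪s, H s⟫ + (εH + μ)‖s‖²) + ½(εH + μ)‖s‖²
  linarith

/-- Lemma 2.1 of the paper: model reduction achieved by an exact solution of the
regularized trust-region subproblem. -/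
theorem exact_model_decrease {E : Type*} [NormedAddCommGroup E] [InnerProductSpace ℝ E]
    (H : E →L[ℝ] E) (hH : ∀ x y : E, ⟪H x, y⟫ = ⟪x, H y⟫)
    (g s : E) (εH μ : ℝ) (hεH : 0 < εH) (hμ : 0 ≤ μ)
    (hstat : g + H s + (εH + μ) • s = 0)
    (hpsd : ∀ v : E, ⟪v, H v⟫ + (εH + μ) * ‖v‖ ^ 2 ≥ 0) :
    -⟪g, s⟫ - (1 / 2) * ⟪s, H s⟫ ≥ (1 / 2) * εH * ‖s‖ ^ 2 :=
  exact_model_decrease_general H g s εH μ hμ hstat hpsd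
end

section
/- Let E be a real inner product space with inner product ⟪·,·⟫ and norm ‖·‖, let H : E → E be a self-adjoint bounded linear operator, let g, s ∈ E, let η ∈ (0,1), εH > 0, L_H > 0 be real numbers, and let f_x, f_xs ∈ ℝ. Suppose that: (i) −⟪g,s⟫ − (1/2)·⟪s,Hs⟫ ≥ (1/2)·εH·‖s‖² (model reduction); (ii) f_xs − f_x ≤ ⟪g,s⟫ + (1/2)·⟪s,Hs⟫ + (L_H/6)·‖s‖³ (cubic Taylor upper bound); (iii) f_x − f_xs < η·(−⟪g,s⟫ − (1/2)·⟪s,Hs⟫) (the iteration is unsuccessful). Then ‖s‖ > 3(1−η)·εH/L_H. -/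
open RealInnerProductSpace

/-!
The Taylor bound says the actual reduction falls short of the model reduction `δ` by at most
`(L_H / 6) ‖s‖³`, while failing the ratio test means it falls short by more than `(1 - η) δ`.
With `δ ≥ εH ‖s‖² / 2` this gives `(1 - η) εH ‖s‖² / 2 < (L_H / 6) ‖s‖³`; dividing by `‖s‖²`
(which cannot vanish, as the strict inequality would then read `0 < 0`) yields the bound.
-/

theorem div_lt_of_mul_sq_lt_mul_pow_three {a b r : ℝ} (hb : 0 < b)
    (h : a * r ^ 2 < b * r ^ 3) : a / b < r := by
  have hr0 : r ≠ 0 := by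
    rintro rfl
    simp at h
  have hab : a < b * r := by
    have hr2 : 0 < r ^ 2 := by positivity
    nlinarith
  rwa [div_lt_iff₀ hb, mul_comm]

theorem unsuccessful_step_long_general {E : Type*} [NormedAddCommGroup E] [InnerProductSpace ℝ E]
    (H : E →L[ℝ] E)
    (g s : E) (η εH L_H : ℝ) (hη : η ∈ Set.Ioo (0 : ℝ) 1) (hL : 0 < L_H)
    (f_x f_xs : ℝ)
    (hmodel : -⟪g, s⟫ - (1 / 2) * ⟪s, H s⟫ ≥ (1 / 2) * εH * ‖s‖ ^ 2)
    (htaylor : f_xs - f_x ≤ ⟪g, s⟫ + (1 / 2) * ⟪s, H s⟫ + (L_H / 6) * ‖s‖ ^ 3)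
    (hunsucc : f_x - f_xs < η * (-⟪g, s⟫ - (1 / 2) * ⟪s, H s⟫)) :
    ‖s‖ > 3 * (1 - η) * εH / L_H := by
  set δ := -⟪g, s⟫ - (1 / 2) * ⟪s, H s⟫ with hδ
  have hcubic : (1 - η) * δ < L_H / 6 * ‖s‖ ^ 3 := by linarith
  have hquad : (1 - η) * ((1 / 2) * εH * ‖s‖ ^ 2) ≤ (1 - η) * δ :=
    mul_le_mul_of_nonneg_left hmodel (sub_nonneg.mpr hη.2.le)
  exact div_lt_of_mul_sq_lt_mul_pow_three hL (by linarith)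

/-- Core implication of Lemma 2.2 of the paper: every unsuccessful trial step of the
exact trust-region Newton method is longer than `3(1-η)·εH/L_H`. -/
theorem unsuccessful_step_long {E : Type*} [NormedAddCommGroup E] [InnerProductSpace ℝ E]
    (H : E →L[ℝ] E) (hH : ∀ x y : E, ⟪H x, y⟫ = ⟪x, H y⟫)
    (g s : E) (η εH L_H : ℝ) (hη : η ∈ Set.Ioo (0 : ℝ) 1) (hεH : 0 < εH) (hL : 0 < L_H)
    (f_x f_xs : ℝ)
    (hmodel : -⟪g, s⟫ - (1 / 2) * ⟪s, H s⟫ ≥ (1 / 2) * εH * ‖s‖ ^ 2)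
    (htaylor : f_xs - f_x ≤ ⟪g, s⟫ + (1 / 2) * ⟪s, H s⟫ + (L_H / 6) * ‖s‖ ^ 3)
    (hunsucc : f_x - f_xs < η * (-⟪g, s⟫ - (1 / 2) * ⟪s, H s⟫)) :
    ‖s‖ > 3 * (1 - η) * εH / L_H :=
  unsuccessful_step_long_general H g s η εH L_H hη hL f_x f_xs hmodel htaylor hunsucc
end

section
/- Let E be a real inner product space with inner product ⟪·,·⟫ and norm ‖·‖, let H : E → E be a self-adjoint bounded linear operator, let g, s, g⁺ ∈ E, let η ∈ (0,1), εH > 0, L_H > 0 be real numbers, and let f_x, f_xs ∈ ℝ. Suppose that: (i) g + H s + εH·s = 0; (ii) ⟪v, H v⟫ + εH·‖v‖² ≥ 0 for every v ∈ E; (iii) ‖g⁺ − g − H s‖ ≤ (L_H/2)·‖s‖²; (iv) f_x − f_xs ≥ η·(−⟪g,s⟫ − (1/2)·⟪s,Hs⟫). Then f_x − f_xs ≥ (η/(2(1+2L_H)))·min{ ‖g⁺‖²/εH, εH³ }. -/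
/-!
Testing the stationarity condition `g + H s + εH s = 0` against `s` and using the curvature bound
`⟪s, H s⟫ ≥ -εH ‖s‖²` shows that the model decrease is at least `εH ‖s‖² / 2`. The same condition
gives `‖g⁺‖ ≤ (L_H/2) ‖s‖² + εH ‖s‖`, so either `‖s‖ ≥ εH / √(1 + 2 L_H)`, and `εH ‖s‖²` dominates
`εH³ / (1 + 2 L_H)`, or `‖s‖` is small, and it dominates `‖g⁺‖² / ((1 + 2 L_H) εH)`.
-/

open RealInnerProductSpace

lemma sq_half_mul_add_le_of_sq_le {t ε L : ℝ} (ht : 0 ≤ t) (hε : 0 < ε) (hL : 0 ≤ L)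
    (h : (1 + 2 * L) * t ^ 2 ≤ ε ^ 2) : (L / 2 * t + ε) ^ 2 ≤ (1 + 2 * L) * ε ^ 2 := by
  have ht_le : t ≤ ε := by nlinarith
  have hLt : 2 * L * t ^ 2 ≤ ε ^ 2 := by nlinarith
  nlinarith [mul_le_mul_of_nonneg_left ht_le (mul_nonneg hL hε.le),
    mul_le_mul_of_nonneg_left hLt hL]

lemma min_sq_div_le_of_le_quadratic {G t ε L : ℝ} (ht : 0 ≤ t) (hε : 0 < ε) (hL : 0 ≤ L)
    (hG₀ : 0 ≤ G) (hG : G ≤ L / 2 * t ^ 2 + ε * t) :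
    min (G ^ 2 / ε) (ε ^ 3) ≤ (1 + 2 * L) * (ε * t ^ 2) := by
  rw [min_le_iff, div_le_iff₀ hε]
  by_contra! ⟨hG_large, ht_small⟩
  have hsq := sq_half_mul_add_le_of_sq_le ht hε hL (by nlinarith)
  have hG_le : G ≤ t * (L / 2 * t + ε) := by linarith
  have : G ^ 2 ≤ t ^ 2 * ((1 + 2 * L) * ε ^ 2) := by
    calc G ^ 2 ≤ (t * (L / 2 * t + ε)) ^ 2 := pow_le_pow_left₀ hG₀ hG_le 2
      _ ≤ t ^ 2 * ((1 + 2 * L) * ε ^ 2) := by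
        rw [mul_pow]; exact mul_le_mul_of_nonneg_left hsq (sq_nonneg t)
  nlinarith

section Stationary

variable {E : Type*} [NormedAddCommGroup E] [InnerProductSpace ℝ E] {H : E →L[ℝ] E}
  {g s : E} {ε : ℝ}

lemma inner_eq_of_stationary (hstat : g + H s + ε • s = 0) :
    ⟪g, s⟫ = -⟪s, H s⟫ - ε * ‖s‖ ^ 2 := by
  have := congrArg (⟪·, s⟫) hstat
  simp only [inner_add_left, real_inner_smul_left, inner_zero_left,
    real_inner_self_eq_norm_sq, real_inner_comm s (H s)] at this
  linarith

lemma model_decrease_ge_of_stationary (hstat : g + H s + ε • s = 0)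
    (hcurv : 0 ≤ ⟪s, H s⟫ + ε * ‖s‖ ^ 2) :
    ε / 2 * ‖s‖ ^ 2 ≤ -⟪g, s⟫ - 1 / 2 * ⟪s, H s⟫ := by
  rw [inner_eq_of_stationary hstat]
  linarith

lemma norm_le_of_stationary {gp : E} (hstat : g + H s + ε • s = 0) (hε : 0 ≤ ε) :
    ‖gp‖ ≤ ‖gp - g - H s‖ + ε * ‖s‖ := by
  have hgs : g + H s = -(ε • s) := eq_neg_of_add_eq_zero_left hstat
  calc ‖gp‖ = ‖(gp - g - H s) + (g + H s)‖ := by abel_nf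
    _ ≤ ‖gp - g - H s‖ + ‖g + H s‖ := norm_add_le _ _
    _ = ‖gp - g - H s‖ + ε * ‖s‖ := by
      rw [hgs, norm_neg, norm_smul, Real.norm_of_nonneg hε]

end Stationary

theorem successful_interior_decrease_general {E : Type*} [NormedAddCommGroup E] [InnerProductSpace ℝ E]
    (H : E →L[ℝ] E)
    (g s gp : E) (η εH L_H : ℝ) (hη : η ∈ Set.Ioo (0 : ℝ) 1) (hεH : 0 < εH) (hL : 0 < L_H)
    (f_x f_xs : ℝ)
    (hstat : g + H s + εH • s = 0)
    (hpsd : ∀ v : E, ⟪v, H v⟫ + εH * ‖v‖ ^ 2 ≥ 0)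
    (hgrad : ‖gp - g - H s‖ ≤ (L_H / 2) * ‖s‖ ^ 2)
    (hsucc : f_x - f_xs ≥ η * (-⟪g, s⟫ - (1 / 2) * ⟪s, H s⟫)) :
    f_x - f_xs ≥ (η / (2 * (1 + 2 * L_H))) * min (‖gp‖ ^ 2 / εH) (εH ^ 3) := by
  have hη₀ : 0 ≤ η := hη.1.le
  have hmodel := model_decrease_ge_of_stationary hstat (hpsd s)
  have hgp : ‖gp‖ ≤ L_H / 2 * ‖s‖ ^ 2 + εH * ‖s‖ :=
    (norm_le_of_stationary hstat hεH.le).trans (by linarith)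
  have hmin := min_sq_div_le_of_le_quadratic (norm_nonneg s) hεH hL.le (norm_nonneg gp) hgp
  calc η / (2 * (1 + 2 * L_H)) * min (‖gp‖ ^ 2 / εH) (εH ^ 3)
      ≤ η / (2 * (1 + 2 * L_H)) * ((1 + 2 * L_H) * (εH * ‖s‖ ^ 2)) := by gcongr
    _ = η * (εH / 2 * ‖s‖ ^ 2) := by field_simp
    _ ≤ η * (-⟪g, s⟫ - 1 / 2 * ⟪s, H s⟫) := by gcongr
    _ ≤ f_x - f_xs := hsucc

/-- Lemma 2.3(ii) of the paper: objective decrease achieved by a successful interior step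
of the exact trust-region Newton method. -/
theorem successful_interior_decrease {E : Type*} [NormedAddCommGroup E] [InnerProductSpace ℝ E]
    (H : E →L[ℝ] E) (hH : ∀ x y : E, ⟪H x, y⟫ = ⟪x, H y⟫)
    (g s gp : E) (η εH L_H : ℝ) (hη : η ∈ Set.Ioo (0 : ℝ) 1) (hεH : 0 < εH) (hL : 0 < L_H)
    (f_x f_xs : ℝ)
    (hstat : g + H s + εH • s = 0)
    (hpsd : ∀ v : E, ⟪v, H v⟫ + εH * ‖v‖ ^ 2 ≥ 0)
    (hgrad : ‖gp - g - H s‖ ≤ (L_H / 2) * ‖s‖ ^ 2)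
    (hsucc : f_x - f_xs ≥ η * (-⟪g, s⟫ - (1 / 2) * ⟪s, H s⟫)) :
    f_x - f_xs ≥ (η / (2 * (1 + 2 * L_H))) * min (‖gp‖ ^ 2 / εH) (εH ^ 3) :=
  successful_interior_decrease_general H g s gp η εH L_H hη hεH hL f_x f_xs hstat hpsd hgrad hsucc
end

section
/- Let N ∈ ℕ, let εg > 0, εH > 0, c > 0, f_low ∈ ℝ, and let f : ℕ → ℝ and G : ℕ → ℝ be sequences. Suppose that: (i) f(i) − f(i+1) ≥ 0 for every i < N; (ii) f(N) ≥ f_low; (iii) for every i < N with G(i) ≤ εg, f(i) − f(i+1) ≥ c·min{εH, εH³}; (iv) for every i < N with G(i) > εg and G(i+1) > εg, f(i) − f(i+1) ≥ c·min{εH, εg²·εH⁻¹, εH³}. Then N ≤ (2(f(0) − f_low)/c)·max{εH⁻¹, εg⁻²·εH, εH⁻³} + 1. -/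
/-!
Split the iterations `i < N` according to whether `G i ≤ εg` (set `S_L`), or `G i > εg` and
`G (i+1) > εg` (set `S_GG`), or `G i > εg ≥ G (i+1)` (set `S_GL`). On `S_L ∪ S_GG` the objective
decreases by at least `c * m` with `m = min εH (min (εg² εH⁻¹) εH³)`, and it never increases, so
`|S_L ∪ S_GG| ≤ (f 0 - f_low) / (c m)`. Every element of `S_GL` is followed by an element of `S_L`
except possibly the last iteration, so `N ≤ 2 |S_L ∪ S_GG| + 1`.
-/

open Finset

theorem card_nsmul_le_sub_of_forall_le_sub_succ {α : Type*} [AddCommGroup α] [PartialOrder α]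
    [IsOrderedAddMonoid α] {f : ℕ → α} {N : ℕ} {δ : α} {s : Finset ℕ} (hs : s ⊆ range N)
    (hmono : ∀ i < N, f i - f (i + 1) ≥ 0) (hδ : ∀ i ∈ s, δ ≤ f i - f (i + 1)) :
    #s • δ ≤ f 0 - f N :=
  calc #s • δ ≤ ∑ i ∈ s, (f i - f (i + 1)) := card_nsmul_le_sum s _ δ hδ
    _ ≤ ∑ i ∈ range N, (f i - f (i + 1)) :=
      sum_le_sum_of_subset_of_nonneg hs fun i hi _ ↦ hmono i (mem_range.mp hi)
    _ = f 0 - f N := sum_range_sub' f N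

theorem le_two_mul_card_filter_or_not_succ_add_one (P : ℕ → Prop) [DecidablePred P] (N : ℕ) :
    N ≤ 2 * #{i ∈ range N | P i ∨ ¬P (i + 1)} + 1 := by
  -- An index `n` with `¬P n ∧ P (n + 1)` is not counted, but its successor will be: the slack
  -- `P N` carries that credit forward.
  suffices h : N ≤ 2 * #{i ∈ range N | P i ∨ ¬P (i + 1)} + if P N then 1 else 0 by
    split_ifs at h <;> omega
  induction N with
  | zero => simp
  | succ n ih =>
    rw [card_filter, sum_range_succ, ← card_filter]
    split_ifs at ih ⊢ <;> grind

theorem inv_min_of_pos {α : Type*} [Field α] [LinearOrder α] [IsStrictOrderedRing α] {a b : α}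
    (ha : 0 < a) (hb : 0 < b) : (min a b)⁻¹ = max a⁻¹ b⁻¹ := by
  rcases le_total a b with h | h
  · rw [min_eq_left h, max_eq_left (inv_anti₀ ha h)]
  · rw [min_eq_right h, max_eq_right (inv_anti₀ hb h)]

/-- The counting argument of Lemmas 2.4 and 4.5 of the paper: a bound on the number of
successful iterations of a trust-region Newton method. -/
theorem successful_iteration_count (N : ℕ) (εg εH c f_low : ℝ)
    (f G : ℕ → ℝ) (hεg : 0 < εg) (hεH : 0 < εH) (hc : 0 < c)
    (hmono : ∀ i < N, f i - f (i + 1) ≥ 0)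
    (hlow : f N ≥ f_low)
    (hSL : ∀ i < N, G i ≤ εg → f i - f (i + 1) ≥ c * min εH (εH ^ 3))
    (hSGG : ∀ i < N, G i > εg → G (i + 1) > εg →
      f i - f (i + 1) ≥ c * min εH (min (εg ^ 2 * εH⁻¹) (εH ^ 3))) :
    (N : ℝ) ≤ (2 * (f 0 - f_low) / c) * max εH⁻¹ (max (εg⁻¹ ^ 2 * εH) (εH ^ 3)⁻¹) + 1 := by
  set m := min εH (min (εg ^ 2 * εH⁻¹) (εH ^ 3))
  set S := {i ∈ range N | G i ≤ εg ∨ ¬G (i + 1) ≤ εg}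
  have hm : 0 < m := lt_min hεH (lt_min (by positivity) (by positivity))
  have hdecrease : ∀ i ∈ S, c * m ≤ f i - f (i + 1) := by
    intro i hi
    obtain ⟨hiN, hlocal_or_next⟩ := mem_filter.mp hi
    by_cases hlocal : G i ≤ εg
    · exact (hSL i (mem_range.mp hiN) hlocal).trans' <|
        mul_le_mul_of_nonneg_left (min_le_min_left _ (min_le_right _ _)) hc.le
    · exact hSGG i (mem_range.mp hiN) (not_le.mp hlocal)
        (not_le.mp (hlocal_or_next.resolve_left hlocal))
  have hcard : (#S : ℝ) * (c * m) ≤ f 0 - f_low := by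
    have := card_nsmul_le_sub_of_forall_le_sub_succ (filter_subset _ _) hmono hdecrease
    rw [nsmul_eq_mul] at this
    linarith
  have hminv : m⁻¹ = max εH⁻¹ (max (εg⁻¹ ^ 2 * εH) (εH ^ 3)⁻¹) := by
    rw [inv_min_of_pos hεH (lt_min (by positivity) (by positivity)),
      inv_min_of_pos (by positivity) (by positivity), mul_inv, inv_inv, inv_pow]
  have hN : (N : ℝ) ≤ 2 * #S + 1 := by
    exact_mod_cast le_two_mul_card_filter_or_not_succ_add_one (fun i ↦ G i ≤ εg) N
  have hS : (#S : ℝ) ≤ (f 0 - f_low) / (c * m) := (le_div_iff₀ (by positivity)).mpr hcard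
  calc (N : ℝ) ≤ 2 * #S + 1 := hN
    _ ≤ 2 * ((f 0 - f_low) / (c * m)) + 1 := by gcongr
    _ = 2 * (f 0 - f_low) / c * m⁻¹ + 1 := by field_simp
    _ = _ := by rw [hminv]
end

section
/- Let K ∈ ℕ, γ₁ ∈ (0,1), δ_max > 0, and T ∈ ℝ with 0 < T ≤ δ_max. Let δ : ℕ → ℝ be a sequence and let U ⊆ {0, 1, …, K−1}, with S = {0, 1, …, K−1} \ U. Suppose that: (i) δ(k) ≤ δ_max for every k ≤ K; (ii) for every k ∈ U, δ(k+1) ≤ γ₁·δ(k) and δ(k) > T. Then |U| ≤ ⌊1 + log(T/δ_max)/log(γ₁)⌋ · (|S| + 1), where log denotes the natural logarithm (so that log(T/δ_max)/log(γ₁) = log_{γ₁}(T/δ_max) ≥ 0). -/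
/-!
Along a run of consecutive unsuccessful iterations the radius contracts
geometrically, so its last radius is at most `γ₁ ^ (m - 1) * δ_max` for a run of length `m`;
since that radius still exceeds `T`, `m ≤ ⌊1 + log_{γ₁}(T / δ_max)⌋`. Sending each unsuccessful
iteration to the first non-unsuccessful index after it (a successful iteration, or `K`) maps `U`
into a set of `|S| + 1` points, and each fibre lies inside one run.
-/

open Finset

namespace Finset

theorem exists_add_notMem (U : Finset ℕ) (u : ℕ) : ∃ m, u + m ∉ U := by
  obtain ⟨n, hn⟩ := U.exists_nat_subset_range
  exact ⟨n, fun h => by simpa using mem_range.mp (hn h)⟩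

noncomputable def runLength (U : Finset ℕ) (u : ℕ) : ℕ :=
  Nat.find (U.exists_add_notMem u)

variable {U : Finset ℕ} {u : ℕ}

theorem add_runLength_notMem : u + U.runLength u ∉ U :=
  Nat.find_spec (U.exists_add_notMem u)

theorem add_mem_of_lt_runLength {j : ℕ} (hj : j < U.runLength u) : u + j ∈ U :=
  not_not.mp (Nat.find_min (U.exists_add_notMem u) hj)

theorem runLength_le_of_add_notMem {m : ℕ} (hm : u + m ∉ U) : U.runLength u ≤ m :=
  Nat.find_min' _ hm

theorem runLength_pos (hu : u ∈ U) : 0 < U.runLength u :=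
  Nat.pos_of_ne_zero fun h => add_runLength_notMem (by rwa [h, add_zero])

theorem add_runLength_mem_insert_sdiff {K : ℕ} (hU : U ⊆ range K) (hu : u ∈ U) :
    u + U.runLength u ∈ insert K (range K \ U) := by
  have huK : u < K := mem_range.mp (hU hu)
  have hle : U.runLength u ≤ K - u :=
    runLength_le_of_add_notMem fun h => by have := mem_range.mp (hU h); omega
  rcases (show u + U.runLength u ≤ K by omega).eq_or_lt with h | h
  · exact h ▸ mem_insert_self _ _
  · exact mem_insert_of_mem (mem_sdiff.mpr ⟨mem_range.mpr h, add_runLength_notMem⟩)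

theorem card_le_mul_card_sdiff_add_one {K n : ℕ} (hU : U ⊆ range K)
    (hrun : ∀ u m, (∀ j < m, u + j ∈ U) → m ≤ n) :
    U.card ≤ n * ((range K \ U).card + 1) := by
  have hfibre : ∀ v ∈ insert K (range K \ U),
      {u ∈ U | u + U.runLength u = v}.card ≤ n := by
    intro v _
    have hsub : {u ∈ U | u + U.runLength u = v} ⊆ Ico (v - n) v := by
      intro u hu
      obtain ⟨huU, rfl⟩ := mem_filter.mp hu
      have hpos := runLength_pos huU
      have hle := hrun u _ fun _ => add_mem_of_lt_runLength
      simp only [mem_Ico]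
      omega
    calc _ ≤ (Ico (v - n) v).card := card_le_card hsub
      _ ≤ n := by rw [Nat.card_Ico]; omega
  calc U.card ≤ n * (insert K (range K \ U)).card :=
        card_le_mul_card_image_of_maps_to (fun _ => add_runLength_mem_insert_sdiff hU) n hfibre
    _ ≤ n * ((range K \ U).card + 1) := Nat.mul_le_mul_left n (card_insert_le _ _)

end Finset

theorem pow_mul_le_of_contracting {δ : ℕ → ℝ} {γ : ℝ} (hγ : 0 ≤ γ) {u m : ℕ}
    (h : ∀ j < m, δ (u + j + 1) ≤ γ * δ (u + j)) : δ (u + m) ≤ γ ^ m * δ u := by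
  induction m with
  | zero => simp
  | succ m ih =>
    calc δ (u + (m + 1)) ≤ γ * δ (u + m) := h m m.lt_succ_self
      _ ≤ γ * (γ ^ m * δ u) := by gcongr; exact ih fun j hj => h j (hj.trans m.lt_succ_self)
      _ = γ ^ (m + 1) * δ u := by ring

theorem lt_log_div_log_of_contracting_run {δ : ℕ → ℝ} {γ δ_max T : ℝ} (hγ₀ : 0 < γ)
    (hγ₁ : γ < 1) (hδ_max : 0 < δ_max) (hT : 0 < T) {u m : ℕ} (hstart : δ u ≤ δ_max)
    (hcontract : ∀ j < m, δ (u + j + 1) ≤ γ * δ (u + j)) (hlast : T < δ (u + m)) :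
    (m : ℝ) < Real.log (T / δ_max) / Real.log γ := by
  have hpow : T / δ_max < γ ^ m := by
    rw [div_lt_iff₀ hδ_max]
    calc T < δ (u + m) := hlast
      _ ≤ γ ^ m * δ u := pow_mul_le_of_contracting hγ₀.le hcontract
      _ ≤ γ ^ m * δ_max := by gcongr
  rw [Real.log_div_log, Real.lt_logb_iff_rpow_lt_of_base_lt_one hγ₀ hγ₁ (by positivity),
    Real.rpow_natCast]
  exact hpow

/-- The counting argument of Lemmas 2.5 and 4.6 of the paper: a bound on the number of
unsuccessful iterations of a trust-region method in terms of the number of successful ones. -/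
theorem unsuccessful_iteration_count (K : ℕ) (γ₁ δ_max T : ℝ)
    (hγ₁ : γ₁ ∈ Set.Ioo (0 : ℝ) 1) (hδ_max : 0 < δ_max) (hT : 0 < T) (hTδ : T ≤ δ_max)
    (δ : ℕ → ℝ) (U : Finset ℕ) (hU : U ⊆ Finset.range K)
    (hbound : ∀ k ≤ K, δ k ≤ δ_max)
    (hunsucc : ∀ k ∈ U, δ (k + 1) ≤ γ₁ * δ k ∧ δ k > T) :
    (U.card : ℝ) ≤
      (⌊1 + Real.log (T / δ_max) / Real.log γ₁⌋ : ℝ) *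
        (((Finset.range K \ U).card : ℝ) + 1) := by
  set L := Real.log (T / δ_max) / Real.log γ₁
  have hL : 0 ≤ L := div_nonneg_of_nonpos
    (Real.log_nonpos (by positivity) ((div_le_one hδ_max).mpr hTδ))
    (Real.log_nonpos hγ₁.1.le hγ₁.2.le)
  have hrun : ∀ u m, (∀ j < m, u + j ∈ U) → m ≤ ⌊1 + L⌋₊ := by
    rintro u (_ | m) hm
    · exact Nat.zero_le _
    have hstart : δ u ≤ δ_max := hbound u (mem_range.mp (hU (hm 0 m.succ_pos))).le
    have hlast : T < δ (u + m) := (hunsucc _ (hm m m.lt_succ_self)).2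
    have := lt_log_div_log_of_contracting_run hγ₁.1 hγ₁.2 hδ_max hT hstart
      (fun j hj => (hunsucc _ (hm j (hj.trans m.lt_succ_self))).1) hlast
    exact Nat.le_floor (by push_cast; linarith)
  have hfloor : ((⌊1 + L⌋₊ : ℕ) : ℝ) = (⌊1 + L⌋ : ℝ) := by
    exact_mod_cast Int.natCast_floor_eq_floor (by linarith)
  rw [← hfloor]
  exact_mod_cast card_le_mul_card_sdiff_add_one hU hrun
end

section
/- Let E be a real inner product space with inner product ⟪·,·⟫ and norm ‖·‖, let H : E → E be a self-adjoint bounded linear operator, let g, s ∈ E, let η ∈ (0,1), εH > 0, L_H > 0 be real numbers, and let f_x, f_xs ∈ ℝ. Suppose that: (i) −⟪g,s⟫ − (1/2)·⟪s,Hs⟫ ≥ (1/4)·εH·‖s‖²; (ii) f_xs − f_x ≤ ⟪g,s⟫ + (1/2)·⟪s,Hs⟫ + (L_H/6)·‖s‖³; (iii) f_x − f_xs < η·(−⟪g,s⟫ − (1/2)·⟪s,Hs⟫). Then ‖s‖ > 3(1−η)·εH/(2L_H). -/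
/-!
Failure of the acceptance test together with the cubic Taylor bound gives
`(1 - η) · Δm < (L_H / 6) ‖s‖³`, where `Δm = -⟪g, s⟫ - ½⟪s, H s⟫` is the model decrease.
Since `Δm ≥ (εH / 4) ‖s‖²`, this reads `(1 - η) (εH / 4) ‖s‖² < (L_H / 6) ‖s‖³`;
it forces `s ≠ 0`, and dividing by `‖s‖²` gives the bound.
-/

open RealInnerProductSpace

lemma lt_mul_of_mul_sq_lt_mul_pow_three {a c r : ℝ} (h : a * r ^ 2 < c * r ^ 3) : a < c * r := by
  have hr : r ≠ 0 := by
    rintro rfl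
    norm_num at h
  have hr2 : 0 < r ^ 2 := by positivity
  exact lt_of_mul_lt_mul_right (by linarith [show c * r ^ 3 = c * r * r ^ 2 by ring]) hr2.le

theorem inexact_unsuccessful_step_long_general {E : Type*} [NormedAddCommGroup E]
    [InnerProductSpace ℝ E]
    (H : E →L[ℝ] E)
    (g s : E) (η εH L_H : ℝ) (hη : η ∈ Set.Ioo (0 : ℝ) 1) (hL : 0 < L_H)
    (f_x f_xs : ℝ)
    (hmodel : -⟪g, s⟫ - (1 / 2) * ⟪s, H s⟫ ≥ (1 / 4) * εH * ‖s‖ ^ 2)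
    (htaylor : f_xs - f_x ≤ ⟪g, s⟫ + (1 / 2) * ⟪s, H s⟫ + (L_H / 6) * ‖s‖ ^ 3)
    (hunsucc : f_x - f_xs < η * (-⟪g, s⟫ - (1 / 2) * ⟪s, H s⟫)) :
    ‖s‖ > 3 * (1 - η) * εH / (2 * L_H) := by
  set Δm := -⟪g, s⟫ - (1 / 2) * ⟪s, H s⟫ with hΔm
  have hdecrease : (1 - η) * Δm < L_H / 6 * ‖s‖ ^ 3 := by linarith
  have hquadratic : (1 - η) * ((1 / 4) * εH) * ‖s‖ ^ 2 < L_H / 6 * ‖s‖ ^ 3 :=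
    calc (1 - η) * ((1 / 4) * εH) * ‖s‖ ^ 2 ≤ (1 - η) * Δm := by
          rw [mul_assoc]
          exact mul_le_mul_of_nonneg_left hmodel (by linarith [hη.2])
      _ < L_H / 6 * ‖s‖ ^ 3 := hdecrease
  have hlinear := lt_mul_of_mul_sq_lt_mul_pow_three hquadratic
  rw [gt_iff_lt, div_lt_iff₀ (by positivity)]
  linarith

/-- Core implication of Lemma 4.3 of the paper: every unsuccessful trial step of the
inexact trust-region Newton-CG method is longer than `3(1-η)·εH/(2L_H)`. -/
theorem inexact_unsuccessful_step_long {E : Type*} [NormedAddCommGroup E]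
    [InnerProductSpace ℝ E]
    (H : E →L[ℝ] E) (hH : ∀ x y : E, ⟪H x, y⟫ = ⟪x, H y⟫)
    (g s : E) (η εH L_H : ℝ) (hη : η ∈ Set.Ioo (0 : ℝ) 1) (hεH : 0 < εH) (hL : 0 < L_H)
    (f_x f_xs : ℝ)
    (hmodel : -⟪g, s⟫ - (1 / 2) * ⟪s, H s⟫ ≥ (1 / 4) * εH * ‖s‖ ^ 2)
    (htaylor : f_xs - f_x ≤ ⟪g, s⟫ + (1 / 2) * ⟪s, H s⟫ + (L_H / 6) * ‖s‖ ^ 3)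
    (hunsucc : f_x - f_xs < η * (-⟪g, s⟫ - (1 / 2) * ⟪s, H s⟫)) :
    ‖s‖ > 3 * (1 - η) * εH / (2 * L_H) :=
  inexact_unsuccessful_step_long_general H g s η εH L_H hη hL f_x f_xs hmodel htaylor hunsucc
end

section
/- Let E be a real inner product space with inner product ⟪·,·⟫ and norm ‖·‖, let H : E → E be a self-adjoint bounded linear operator, let g, s, g⁺ ∈ E, let η ∈ (0,1), εH > 0, L_H > 0, ζ ∈ (0,1) be real numbers, and let f_x, f_xs ∈ ℝ. Suppose that: (i) ‖H s + 2εH·s + g‖ ≤ (ζ/2)·εH·‖s‖ (truncated-CG residual condition); (ii) ‖g⁺ − g − H s‖ ≤ (L_H/2)·‖s‖²; (iii) −⟪g,s⟫ − (1/2)·⟪s,Hs⟫ ≥ (1/4)·εH·‖s‖²; (iv) f_x − f_xs ≥ η·(−⟪g,s⟫ − (1/2)·⟪s,Hs⟫). Then f_x − f_xs ≥ (η/(4(7+2L_H)))·min{ ‖g⁺‖²/εH, εH³ }. -/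
/-!
By (iii) and (iv), `f_x - f_xs ≥ η εH ‖s‖² / 4`, so it suffices to show
`min (‖g⁺‖² / εH) (εH³) ≤ (7 + 2 L_H) εH ‖s‖²`. Writing
`g⁺ = (g⁺ - g - H s) + (H s + 2 εH s + g) - 2 εH s`, hypotheses (i) and (ii) give
`‖g⁺‖ ≤ (L_H / 2) ‖s‖² + (5 / 2) εH ‖s‖`. If `εH² ≤ (7 + 2 L_H) ‖s‖²` the `εH³` branch of the
minimum suffices; otherwise `2 L_H ‖s‖² ≤ εH²`, which turns the bound on `‖g⁺‖` into
`‖g⁺‖² ≤ (7 + 2 L_H) εH² ‖s‖²`.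
-/

open RealInnerProductSpace

theorem norm_le_of_residual_of_taylor {E : Type*} [SeminormedAddCommGroup E] [NormedSpace ℝ E]
    (H : E →L[ℝ] E) (g s gp : E) {εH L_H ζ : ℝ} (hεH : 0 ≤ εH) (hζ : ζ ≤ 1)
    (hres : ‖H s + (2 * εH) • s + g‖ ≤ (ζ / 2) * εH * ‖s‖)
    (hgrad : ‖gp - g - H s‖ ≤ (L_H / 2) * ‖s‖ ^ 2) :
    ‖gp‖ ≤ L_H / 2 * ‖s‖ ^ 2 + 5 / 2 * εH * ‖s‖ := by
  have hsplit : gp = (gp - g - H s) + (H s + (2 * εH) • s + g) - (2 * εH) • s := by abel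
  have hζres : ζ / 2 * εH * ‖s‖ ≤ 1 / 2 * εH * ‖s‖ := by gcongr
  calc ‖gp‖ = ‖(gp - g - H s) + (H s + (2 * εH) • s + g) - (2 * εH) • s‖ := congrArg norm hsplit
    _ ≤ ‖gp - g - H s‖ + ‖H s + (2 * εH) • s + g‖ + ‖(2 * εH) • s‖ :=
        (norm_sub_le _ _).trans (add_le_add_left (norm_add_le _ _) _)
    _ ≤ L_H / 2 * ‖s‖ ^ 2 + 5 / 2 * εH * ‖s‖ := by
        rw [norm_smul, Real.norm_of_nonneg (by positivity)]
        linarith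

theorem sq_le_of_two_mul_sq_le {L e u : ℝ} (hL : 0 ≤ L) (h : 2 * L * u ^ 2 ≤ e ^ 2) :
    (L / 2 * u ^ 2 + 5 / 2 * e * u) ^ 2 ≤ (7 + 2 * L) * e ^ 2 * u ^ 2 := by
  have hfactor : (L / 2 * u + 5 / 2 * e) ^ 2 ≤ (7 + 2 * L) * e ^ 2 := by
    nlinarith [mul_le_mul_of_nonneg_left h hL, mul_nonneg hL (sq_nonneg (u - e))]
  calc (L / 2 * u ^ 2 + 5 / 2 * e * u) ^ 2 = (L / 2 * u + 5 / 2 * e) ^ 2 * u ^ 2 := by ring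
    _ ≤ (7 + 2 * L) * e ^ 2 * u ^ 2 := by gcongr

theorem min_sq_div_pow_three_le {L e u G : ℝ} (hL : 0 ≤ L) (he : 0 < e)
    (hG : 0 ≤ G) (hGu : G ≤ L / 2 * u ^ 2 + 5 / 2 * e * u) :
    min (G ^ 2 / e) (e ^ 3) ≤ (7 + 2 * L) * e * u ^ 2 := by
  rcases le_or_gt (e ^ 2) ((7 + 2 * L) * u ^ 2) with hlarge | hsmall
  · calc min (G ^ 2 / e) (e ^ 3) ≤ e ^ 3 := min_le_right _ _
      _ = e * e ^ 2 := by ring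
      _ ≤ e * ((7 + 2 * L) * u ^ 2) := by gcongr
      _ = (7 + 2 * L) * e * u ^ 2 := by ring
  · have hsq : G ^ 2 ≤ (7 + 2 * L) * e ^ 2 * u ^ 2 :=
      (pow_le_pow_left₀ hG hGu 2).trans
        (sq_le_of_two_mul_sq_le hL (by nlinarith [sq_nonneg u]))
    calc min (G ^ 2 / e) (e ^ 3) ≤ G ^ 2 / e := min_le_left _ _
      _ ≤ (7 + 2 * L) * e ^ 2 * u ^ 2 / e := by gcongr
      _ = (7 + 2 * L) * e * u ^ 2 := by field_simp

theorem inexact_successful_interior_decrease_general {E : Type*} [NormedAddCommGroup E]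
    [InnerProductSpace ℝ E]
    (H : E →L[ℝ] E)
    (g s gp : E) (η εH L_H ζ : ℝ) (hη : η ∈ Set.Ioo (0 : ℝ) 1) (hεH : 0 < εH)
    (hL : 0 < L_H) (hζ : ζ ∈ Set.Ioo (0 : ℝ) 1)
    (f_x f_xs : ℝ)
    (hres : ‖H s + (2 * εH) • s + g‖ ≤ (ζ / 2) * εH * ‖s‖)
    (hgrad : ‖gp - g - H s‖ ≤ (L_H / 2) * ‖s‖ ^ 2)
    (hmodel : -⟪g, s⟫ - (1 / 2) * ⟪s, H s⟫ ≥ (1 / 4) * εH * ‖s‖ ^ 2)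
    (hsucc : f_x - f_xs ≥ η * (-⟪g, s⟫ - (1 / 2) * ⟪s, H s⟫)) :
    f_x - f_xs ≥ (η / (4 * (7 + 2 * L_H))) * min (‖gp‖ ^ 2 / εH) (εH ^ 3) := by
  have hgp := norm_le_of_residual_of_taylor H g s gp hεH.le hζ.2.le hres hgrad
  have hmin := min_sq_div_pow_three_le hL.le hεH (norm_nonneg gp) hgp
  have hdecrease : η * (1 / 4 * εH * ‖s‖ ^ 2) ≤ f_x - f_xs :=
    (mul_le_mul_of_nonneg_left hmodel hη.1.le).trans hsucc
  calc (η / (4 * (7 + 2 * L_H))) * min (‖gp‖ ^ 2 / εH) (εH ^ 3)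
      ≤ (η / (4 * (7 + 2 * L_H))) * ((7 + 2 * L_H) * εH * ‖s‖ ^ 2) :=
        mul_le_mul_of_nonneg_left hmin (div_nonneg hη.1.le (by linarith))
    _ = η * (1 / 4 * εH * ‖s‖ ^ 2) := by field_simp
    _ ≤ f_x - f_xs := hdecrease

/-- Lemma 4.4(ii) of the paper: objective decrease achieved by a successful interior step
of the inexact trust-region Newton-CG method. -/
theorem inexact_successful_interior_decrease {E : Type*} [NormedAddCommGroup E]
    [InnerProductSpace ℝ E]
    (H : E →L[ℝ] E) (hH : ∀ x y : E, ⟪H x, y⟫ = ⟪x, H y⟫)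
    (g s gp : E) (η εH L_H ζ : ℝ) (hη : η ∈ Set.Ioo (0 : ℝ) 1) (hεH : 0 < εH)
    (hL : 0 < L_H) (hζ : ζ ∈ Set.Ioo (0 : ℝ) 1)
    (f_x f_xs : ℝ)
    (hres : ‖H s + (2 * εH) • s + g‖ ≤ (ζ / 2) * εH * ‖s‖)
    (hgrad : ‖gp - g - H s‖ ≤ (L_H / 2) * ‖s‖ ^ 2)
    (hmodel : -⟪g, s⟫ - (1 / 2) * ⟪s, H s⟫ ≥ (1 / 4) * εH * ‖s‖ ^ 2)
    (hsucc : f_x - f_xs ≥ η * (-⟪g, s⟫ - (1 / 2) * ⟪s, H s⟫)) :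
    f_x - f_xs ≥ (η / (4 * (7 + 2 * L_H))) * min (‖gp‖ ^ 2 / εH) (εH ^ 3) :=
  inexact_successful_interior_decrease_general H g s gp η εH L_H ζ hη hεH hL hζ f_x f_xs hres hgrad
    hmodel hsucc
end

section
/- Let ξ ∈ [0,1), let P : ℕ → ℝ with P(k) ≥ 0 for all k, and let M : ℕ → ℕ. Suppose that: (i) M(0) ≤ 1; (ii) for every k, either M(k+1) = M(k) or M(k+1) = M(k) + 1; (iii) if M(0) = 0 then P(0) = 0, and if M(0) = 1 then P(0) ≤ ξ; (iv) for every k, if M(k+1) = M(k) then P(k+1) = 0; (v) for every k, if M(k+1) = M(k) + 1 then P(k+1) ≤ ξ·(1 − Σ_{i=0}^{k} P(i)). Then for every k, Σ_{i=0}^{k} P(i) ≤ 1 − (1−ξ)^{M(k)}. -/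
/-! Writing `S k = ∑_{i ≤ k} P i`, an oracle call at step `k + 1` gives
`1 - S (k + 1) ≥ (1 - ξ) (1 - S k)`, while a step without a call leaves `S` unchanged;
so `1 - S k` shrinks by at most a factor `1 - ξ` per call. -/

lemma add_mul_one_sub_le_one_sub_pow_succ {ξ S : ℝ} {m : ℕ} (hξ : ξ ≤ 1)
    (hS : S ≤ 1 - (1 - ξ) ^ m) : S + ξ * (1 - S) ≤ 1 - (1 - ξ) ^ (m + 1) := by
  have hmul : (1 - ξ) * (1 - ξ) ^ m ≤ (1 - ξ) * (1 - S) :=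
    mul_le_mul_of_nonneg_left (by linarith) (by linarith)
  calc S + ξ * (1 - S) = 1 - (1 - ξ) * (1 - S) := by ring
    _ ≤ 1 - (1 - ξ) * (1 - ξ) ^ m := by linarith
    _ = 1 - (1 - ξ) ^ (m + 1) := by rw [pow_succ']

theorem meo_failure_probability_bound_general (ξ : ℝ) (hξ : ξ ∈ Set.Ico (0 : ℝ) 1)
    (P : ℕ → ℝ) (M : ℕ → ℕ)
    (hM0 : M 0 ≤ 1)
    (hMstep : ∀ k, M (k + 1) = M k ∨ M (k + 1) = M k + 1)
    (hP0 : (M 0 = 0 → P 0 = 0) ∧ (M 0 = 1 → P 0 ≤ ξ))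
    (hsame : ∀ k, M (k + 1) = M k → P (k + 1) = 0)
    (hcall : ∀ k, M (k + 1) = M k + 1 →
      P (k + 1) ≤ ξ * (1 - ∑ i ∈ Finset.range (k + 1), P i)) :
    ∀ k, ∑ i ∈ Finset.range (k + 1), P i ≤ 1 - (1 - ξ) ^ M k := by
  intro k
  induction k with
  | zero =>
    rw [Finset.sum_range_one]
    rcases Nat.le_one_iff_eq_zero_or_eq_one.mp hM0 with hnone | hone
    · simp [hnone, hP0.1 hnone]
    · simpa [hone] using hP0.2 hone
  | succ k ih =>
    rw [Finset.sum_range_succ]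
    rcases hMstep k with hsame_k | hcall_k
    · rwa [hsame_k, hsame k hsame_k, add_zero]
    · rw [hcall_k]
      exact (add_le_add_right (hcall k hcall_k) _).trans
        (add_mul_one_sub_le_one_sub_pow_succ hξ.2.le ih)

/-- The induction at the heart of the probabilistic guarantee of Theorem 4.7 of the paper:
the cumulative failure probability after `k` iterations is at most `1 - (1-ξ)^{M(k)}`,
where `M(k)` is the number of calls to the minimum eigenvalue oracle so far. -/
theorem meo_failure_probability_bound (ξ : ℝ) (hξ : ξ ∈ Set.Ico (0 : ℝ) 1)
    (P : ℕ → ℝ) (hP : ∀ k, 0 ≤ P k) (M : ℕ → ℕ)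
    (hM0 : M 0 ≤ 1)
    (hMstep : ∀ k, M (k + 1) = M k ∨ M (k + 1) = M k + 1)
    (hP0 : (M 0 = 0 → P 0 = 0) ∧ (M 0 = 1 → P 0 ≤ ξ))
    (hsame : ∀ k, M (k + 1) = M k → P (k + 1) = 0)
    (hcall : ∀ k, M (k + 1) = M k + 1 →
      P (k + 1) ≤ ξ * (1 - ∑ i ∈ Finset.range (k + 1), P i)) :
    ∀ k, ∑ i ∈ Finset.range (k + 1), P i ≤ 1 - (1 - ξ) ^ M k :=
  meo_failure_probability_bound_general ξ hξ P M hM0 hMstep hP0 hsame hcall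
end

section
/- For all real numbers a > 0, b > 0, and t ≥ 0, one has −a + √(a² + b·t) ≥ (−a + √(a² + b))·min{t, 1}. -/
/-! For `t ≤ 1`, concavity of `√` between `a²` and `a² + b` gives
`√(a² + b t) ≥ (1 - t)|a| + t √(a² + b) ≥ (1 - t) a + t √(a² + b)`;
for `t ≥ 1`, monotonicity of `√` suffices. -/

theorem Real.sqrt_convex_combination_le {x y s : ℝ} (hx : 0 ≤ x) (hy : 0 ≤ y) (hs₀ : 0 ≤ s)
    (hs₁ : s ≤ 1) : (1 - s) * √x + s * √y ≤ √((1 - s) * x + s * y) :=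
  Real.strictConcaveOn_sqrt.concaveOn.2 hx hy (sub_nonneg.2 hs₁) hs₀ (sub_add_cancel 1 s)

theorem sqrt_min_ineq_general (a b t : ℝ) (hb : 0 < b) (ht : 0 ≤ t) :
    -a + Real.sqrt (a ^ 2 + b * t) ≥ (-a + Real.sqrt (a ^ 2 + b)) * min t 1 := by
  rcases le_total t 1 with h | h
  · rw [min_eq_left h]
    have hconc : (1 - t) * |a| + t * √(a ^ 2 + b) ≤ √(a ^ 2 + b * t) := by
      have := Real.sqrt_convex_combination_le (sq_nonneg a)
        (by positivity : 0 ≤ a ^ 2 + b) ht h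
      rwa [Real.sqrt_sq_eq_abs, show (1 - t) * a ^ 2 + t * (a ^ 2 + b) = a ^ 2 + b * t by ring]
        at this
    have habs : (1 - t) * a ≤ (1 - t) * |a| :=
      mul_le_mul_of_nonneg_left (le_abs_self a) (by linarith)
    linarith
  · rw [min_eq_right h, mul_one]
    gcongr
    exact le_mul_of_one_le_right hb.le h

/-- Inequality (2.12) of the paper (Lemma 17 of Royer and Wright, 2018):
`-a + √(a² + b·t) ≥ (-a + √(a² + b))·min{t, 1}` for `a, b > 0` and `t ≥ 0`. -/
theorem sqrt_min_ineq (a b t : ℝ) (ha : 0 < a) (hb : 0 < b) (ht : 0 ≤ t) :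
    -a + Real.sqrt (a ^ 2 + b * t) ≥ (-a + Real.sqrt (a ^ 2 + b)) * min t 1 :=
  sqrt_min_ineq_general a b t hb ht
end

section
/- Let L > 0, ε > 0, G ≥ 0, and t ≥ 0 be real numbers such that (L/2)·t² + ε·t − G ≥ 0. Then t ≥ (1/√(1+2L))·min{ G/ε, ε }. -/
/-!
The map `x ↦ (L/2)x² + εx` is increasing on `[0, ∞)`, so it suffices to show that its value at
`x = c·m`, with `c = 1/√(1+2L)` and `m = min{G/ε, ε}`, is at most `G`. Since `m ≤ ε`, that value is
at most `εm·((L/2)c² + c)`, and `1 - (L/2)c² - c = c·(c(1 + 3L/2) - 1) ≥ 0` since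
`c²(1 + 2L) = 1` and `(1 + 3L/2)² ≥ 1 + 2L`; finally `εm ≤ G`.
-/

open Set

lemma strictMonoOn_quadratic {a b : ℝ} (ha : 0 ≤ a) (hb : 0 < b) :
    StrictMonoOn (fun x : ℝ => a * x ^ 2 + b * x) (Ici 0) := by
  intro x (hx : 0 ≤ x) y _ hxy
  have hsq : x ^ 2 ≤ y ^ 2 := pow_le_pow_left₀ hx hxy.le 2
  show a * x ^ 2 + b * x < a * y ^ 2 + b * y
  nlinarith [mul_le_mul_of_nonneg_left hsq ha]

lemma half_mul_inv_sqrt_sq_add_inv_sqrt_le_one {L : ℝ} (hL : 0 ≤ L) :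
    L / 2 * (1 / Real.sqrt (1 + 2 * L)) ^ 2 + 1 / Real.sqrt (1 + 2 * L) ≤ 1 := by
  set c := 1 / Real.sqrt (1 + 2 * L)
  have hc0 : 0 ≤ c := by positivity
  have hc2 : c ^ 2 * (1 + 2 * L) = 1 := by
    rw [div_pow, one_pow, Real.sq_sqrt (by linarith), one_div_mul_cancel (by linarith)]
  have hc1 : 1 ≤ c * (1 + 3 * L / 2) := by
    nlinarith [sq_nonneg (c * (1 + 3 * L / 2)), mul_nonneg hc0 hL]
  nlinarith [mul_nonneg hc0 (sub_nonneg.mpr hc1)]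

lemma quadratic_mul_le {a b c m : ℝ} (ha : 0 ≤ a) (hm : 0 ≤ m) (hmb : m ≤ b)
    (hac : a * c ^ 2 + c ≤ 1) :
    a * (c * m) ^ 2 + b * (c * m) ≤ b * m := by
  have hb : 0 ≤ b := hm.trans hmb
  calc a * (c * m) ^ 2 + b * (c * m) = m * (a * c ^ 2 * m + b * c) := by ring
    _ ≤ m * (a * c ^ 2 * b + b * c) := by gcongr
    _ = b * m * (a * c ^ 2 + c) := by ring
    _ ≤ b * m := mul_le_of_le_one_right (by positivity) hac

lemma mul_min_div_le {ε G : ℝ} (hε : 0 < ε) : ε * min (G / ε) ε ≤ G :=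
  calc ε * min (G / ε) ε ≤ ε * (G / ε) := by gcongr; exact min_le_left _ _
    _ = G := mul_div_cancel₀ G hε.ne'

/-- Inequality from the proof of Lemma 2.3(ii) of the paper: if
`(L/2)·t² + ε·t - G ≥ 0` with `L, ε > 0`, `G, t ≥ 0`, then
`t ≥ (1/√(1+2L))·min{G/ε, ε}`. -/
theorem quadratic_step_lower_bound (L ε G t : ℝ) (hL : 0 < L) (hε : 0 < ε)
    (hG : 0 ≤ G) (ht : 0 ≤ t)
    (hq : (L / 2) * t ^ 2 + ε * t - G ≥ 0) :
    t ≥ (1 / Real.sqrt (1 + 2 * L)) * min (G / ε) ε := by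
  set c := 1 / Real.sqrt (1 + 2 * L)
  set m := min (G / ε) ε
  have hm : 0 ≤ m := le_min (div_nonneg hG hε.le) hε.le
  have hcm : 0 ≤ c * m := by positivity
  have hvalue : L / 2 * (c * m) ^ 2 + ε * (c * m) ≤ L / 2 * t ^ 2 + ε * t :=
    calc L / 2 * (c * m) ^ 2 + ε * (c * m)
        ≤ ε * m := quadratic_mul_le (by positivity) hm (min_le_right _ _)
          (half_mul_inv_sqrt_sq_add_inv_sqrt_le_one hL.le)
      _ ≤ G := mul_min_div_le hε
      _ ≤ L / 2 * t ^ 2 + ε * t := by linarith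
  exact ((strictMonoOn_quadratic (by positivity) hε).le_iff_le hcm ht).mp hvalue
end

section
/- Let L > 0, ε > 0, G ≥ 0, and t ≥ 0 be real numbers such that (L/2)·t² + (5/2)·ε·t − G ≥ 0. Then t ≥ (1/√(7+2L))·min{ G/ε, ε }. -/
/-!
Write `S = √(7 + 2L)`. If `t S ≥ ε` there is nothing to prove. Otherwise `t ≤ ε / S`, and since
`5 S ≤ 14 + 3L`, i.e. `L / 2 + 5 S / 2 ≤ S²`, the quadratic is bounded by a linear function:
`(L/2) t² + (5/2) ε t ≤ ε t S`. Hence `G ≤ ε t S`, i.e. `t S ≥ G / ε`.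
-/

open Real

lemma five_mul_sqrt_seven_add_two_mul_le {L : ℝ} (hL : 0 ≤ L) :
    5 * √(7 + 2 * L) ≤ 14 + 3 * L := by
  have h : √(7 + 2 * L) ≤ (14 + 3 * L) / 5 :=
    Real.sqrt_le_iff.mpr ⟨by positivity, by nlinarith⟩
  linarith

lemma half_mul_add_le_mul_sqrt {L ε t : ℝ} (hL : 0 ≤ L) (hε : 0 ≤ ε)
    (ht : t * √(7 + 2 * L) ≤ ε) :
    L / 2 * t + 5 / 2 * ε ≤ ε * √(7 + 2 * L) := by
  have hS : 0 < √(7 + 2 * L) := Real.sqrt_pos.mpr (by linarith)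
  have hS2 : √(7 + 2 * L) ^ 2 = 7 + 2 * L := Real.sq_sqrt (by linarith)
  have h5 := five_mul_sqrt_seven_add_two_mul_le hL
  refine le_of_mul_le_mul_right ?_ hS
  nlinarith [mul_le_mul_of_nonneg_left ht hL, mul_le_mul_of_nonneg_left h5 hε]

lemma quadratic_le_mul_mul_sqrt {L ε t : ℝ} (hL : 0 ≤ L) (ht : 0 ≤ t)
    (hts : t * √(7 + 2 * L) ≤ ε) :
    L / 2 * t ^ 2 + 5 / 2 * ε * t ≤ ε * (t * √(7 + 2 * L)) := by
  have hε : 0 ≤ ε := le_trans (by positivity) hts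
  have h := mul_le_mul_of_nonneg_left (half_mul_add_le_mul_sqrt hL hε hts) ht
  linarith

theorem inexact_quadratic_step_lower_bound_general (L ε G t : ℝ) (hL : 0 < L) (hε : 0 < ε)
    (ht : 0 ≤ t)
    (hq : (L / 2) * t ^ 2 + (5 / 2) * ε * t - G ≥ 0) :
    t ≥ (1 / Real.sqrt (7 + 2 * L)) * min (G / ε) ε := by
  have hS : 0 < √(7 + 2 * L) := Real.sqrt_pos.mpr (by linarith)
  rw [one_div_mul_eq_div, ge_iff_le, div_le_iff₀ hS]
  rcases le_total ε (t * √(7 + 2 * L)) with hlarge | hsmall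
  · exact min_le_of_right_le hlarge
  · refine min_le_of_left_le ((div_le_iff₀ hε).mpr ?_)
    linarith [quadratic_le_mul_mul_sqrt hL.le ht hsmall]

/-- Inequality from the proof of Lemma 4.4(ii) of the paper: if
`(L/2)·t² + (5/2)·ε·t - G ≥ 0` with `L, ε > 0`, `G, t ≥ 0`, then
`t ≥ (1/√(7+2L))·min{G/ε, ε}`. -/
theorem inexact_quadratic_step_lower_bound (L ε G t : ℝ) (hL : 0 < L) (hε : 0 < ε)
    (hG : 0 ≤ G) (ht : 0 ≤ t)
    (hq : (L / 2) * t ^ 2 + (5 / 2) * ε * t - G ≥ 0) :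
    t ≥ (1 / Real.sqrt (7 + 2 * L)) * min (G / ε) ε :=
  inexact_quadratic_step_lower_bound_general L ε G t hL hε ht hq
end

section
/- Consider a run of length K of the exact regularized trust-region Newton method (as described in the context) applied to a twice continuously differentiable function f : ℝⁿ → ℝ that is bounded below by f_low and whose Hessian is L_H-Lipschitz continuous (operator norm), with tolerances εg, εH > 0 and parameters γ₁ ∈ (0,1), γ₂ ≥ 1, ψ ∈ (1/γ₂, 1], η ∈ (0,1), 0 < δ₀ ≤ δ_max. Then: (a) for every unsuccessful iteration k < K, ‖s_k‖ > 3(1−η)·εH/L_H (and hence δ_k > 3(1−η)·εH/L_H); and (b) δ_k ≥ min{ δ₀, 3γ₁(1−η)·εH/L_H } for every k ≤ K. -/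
/-!
Integrating the Lipschitz bound on the Hessian twice along the segment from `x` to `x + v`
gives the cubic upper bound `f (x + v) ≤ f x + ⟪∇f x, v⟫ + ½⟪v, ∇²f x v⟫ + L_H/6 ‖v‖³`.
Comparing the exact step `s` with `u = 0` shows that the model decrease is at least
`εH/2 ‖s‖²`, so a failed ratio test forces `(1 - η) εH/2 ‖s‖² < L_H/6 ‖s‖³`, i.e.
`‖s‖ > 3(1 - η) εH / L_H`. Since the radius only shrinks on unsuccessful iterations, and then
to `γ₁ ‖s‖`, it never drops below `min δ₀ (3γ₁(1 - η) εH / L_H)`.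
-/

open RealInnerProductSpace Set

theorem abs_le_div_mul_pow_of_abs_deriv_le_mul_pow {φ φ' : ℝ → ℝ} {C : ℝ} {k : ℕ}
    (h0 : φ 0 = 0) (hφ : ∀ t ∈ Icc (0 : ℝ) 1, HasDerivAt φ (φ' t) t)
    (hbound : ∀ t ∈ Ico (0 : ℝ) 1, |φ' t| ≤ C * t ^ k) :
    ∀ t ∈ Icc (0 : ℝ) 1, |φ t| ≤ C / (k + 1) * t ^ (k + 1) := by
  have hB : ∀ t : ℝ, HasDerivAt (fun t => C / (k + 1) * t ^ (k + 1)) (C * t ^ k) t := fun t =>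
    ((hasDerivAt_pow (k + 1) t).const_mul (C / (k + 1))).congr_deriv (by
      rw [Nat.add_sub_cancel]; push_cast; field_simp)
  exact image_norm_le_of_norm_deriv_right_le_deriv_boundary
    (fun t ht => (hφ t ht).continuousAt.continuousWithinAt)
    (fun t ht => (hφ t (Ico_subset_Icc_self ht)).hasDerivWithinAt) (by simp [h0]) hB hbound

theorem three_mul_div_lt_of_ratio_test_fails {r m Δ η ε L : ℝ} (hL : 0 < L) (hη : η ≤ 1)
    (hm : ε / 2 * r ^ 2 ≤ m) (hΔ : m - L / 6 * r ^ 3 ≤ Δ) (hfail : Δ < η * m) :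
    3 * (1 - η) * ε / L < r := by
  have hcubic : 0 < r ^ 2 * (L * r - 3 * (1 - η) * ε) := by
    nlinarith [mul_le_mul_of_nonneg_left hm (sub_nonneg.2 hη)]
  rw [div_lt_iff₀ hL]
  nlinarith [pos_of_mul_pos_right hcubic (sq_nonneg r)]

section Taylor

variable {E : Type*} [NormedAddCommGroup E] [InnerProductSpace ℝ E]
  {f : E → ℝ} {g : E → E} {H : E → E →L[ℝ] E} {L : ℝ}

theorem hasDerivAt_add_smul (x v : E) (t : ℝ) : HasDerivAt (fun t : ℝ => x + t • v) v t := by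
  simpa using ((hasDerivAt_id t).smul_const v).const_add x

theorem hasDerivAt_comp_add_smul_of_hasGradientAt [CompleteSpace E]
    (hgrad : ∀ x, HasGradientAt f (g x) x) (x v : E) (t : ℝ) :
    HasDerivAt (fun t : ℝ => f (x + t • v)) ⟪g (x + t • v), v⟫ t :=
  (hgrad _).hasFDerivAt.comp_hasDerivAt t (hasDerivAt_add_smul x v t)

theorem hasDerivAt_inner_comp_add_smul (hH : ∀ x, HasFDerivAt g (H x) x) (x v : E) (t : ℝ) :
    HasDerivAt (fun t : ℝ => ⟪g (x + t • v), v⟫) ⟪H (x + t • v) v, v⟫ t :=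
  ((hH _).comp_hasDerivAt t (hasDerivAt_add_smul x v t)).inner ℝ (hasDerivAt_const t v)
    |>.congr_deriv (by simp)

theorem le_quadratic_model_add_cube_of_lipschitz_hessian [CompleteSpace E]
    (hgrad : ∀ x, HasGradientAt f (g x) x) (hH : ∀ x, HasFDerivAt g (H x) x)
    (hLip : ∀ x y, ‖H x - H y‖ ≤ L * ‖x - y‖) (x v : E) :
    f (x + v) ≤ f x + ⟪g x, v⟫ + 1 / 2 * ⟪v, H x v⟫ + L / 6 * ‖v‖ ^ 3 := by
  have hHess_incr : ∀ t ∈ Ico (0 : ℝ) 1,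
      |⟪H (x + t • v) v, v⟫ - ⟪H x v, v⟫| ≤ L * ‖v‖ ^ 3 * t ^ 1 := fun t ht => by
    rw [← inner_sub_left, ← sub_apply]
    calc |⟪(H (x + t • v) - H x) v, v⟫| ≤ ‖H (x + t • v) - H x‖ * ‖v‖ * ‖v‖ :=
          (abs_real_inner_le_norm _ _).trans
            (mul_le_mul_of_nonneg_right (ContinuousLinearMap.le_opNorm _ _) (norm_nonneg v))
      _ ≤ L * (t * ‖v‖) * ‖v‖ * ‖v‖ := by
          gcongr
          simpa [norm_smul, abs_of_nonneg ht.1] using hLip (x + t • v) x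
      _ = L * ‖v‖ ^ 3 * t ^ 1 := by ring
  have hgrad_rem := abs_le_div_mul_pow_of_abs_deriv_le_mul_pow
    (φ := fun t => ⟪g (x + t • v), v⟫ - ⟪g x, v⟫ - t * ⟪H x v, v⟫) (by simp)
    (fun t _ => (((hasDerivAt_inner_comp_add_smul hH x v t).sub_const _).sub
      ((hasDerivAt_id t).mul_const _)).congr_deriv (by simp))
    hHess_incr
  have hval_rem := abs_le_div_mul_pow_of_abs_deriv_le_mul_pow
    (φ := fun t => f (x + t • v) - f x - t * ⟪g x, v⟫ - t ^ 2 / 2 * ⟪H x v, v⟫)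
    (φ' := fun t => ⟪g (x + t • v), v⟫ - ⟪g x, v⟫ - t * ⟪H x v, v⟫) (by simp)
    (fun t _ => ((((hasDerivAt_comp_add_smul_of_hasGradientAt hgrad x v t).sub_const _).sub
        ((hasDerivAt_id t).mul_const _)).sub
        (((hasDerivAt_pow 2 t).div_const 2).mul_const ⟪H x v, v⟫)).congr_deriv (by simp))
    (fun t ht => by simpa using hgrad_rem t (Ico_subset_Icc_self ht))
    1 (right_mem_Icc.2 zero_le_one)
  rw [real_inner_comm (H x v) v]
  norm_num at hval_rem
  linarith [(abs_le.1 hval_rem).2]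

theorem lt_norm_of_not_sufficient_decrease [CompleteSpace E]
    (hgrad : ∀ x, HasGradientAt f (g x) x) (hH : ∀ x, HasFDerivAt g (H x) x)
    (hLip : ∀ x y, ‖H x - H y‖ ≤ L * ‖x - y‖) (hL : 0 < L) {x s : E} {δ ε η : ℝ}
    (hη : η ≤ 1) (hδ : 0 ≤ δ)
    (hopt : ∀ u, ‖u‖ ≤ δ →
      ⟪g x, s⟫ + 1 / 2 * ⟪s, H x s⟫ + 1 / 2 * ε * ‖s‖ ^ 2 ≤
      ⟪g x, u⟫ + 1 / 2 * ⟪u, H x u⟫ + 1 / 2 * ε * ‖u‖ ^ 2)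
    (hfail : ¬ f x - f (x + s) ≥ η * (-⟪g x, s⟫ - 1 / 2 * ⟪s, H x s⟫)) :
    3 * (1 - η) * ε / L < ‖s‖ := by
  have hzero := hopt 0 (by simpa using hδ)
  simp only [inner_zero_right, map_zero, norm_zero] at hzero
  refine three_mul_div_lt_of_ratio_test_fails hL hη (m := -⟪g x, s⟫ - 1 / 2 * ⟪s, H x s⟫)
    (by linarith) ?_ (not_le.1 hfail)
  linarith [le_quadratic_model_add_cube_of_lipschitz_hessian hgrad hH hLip x s]

end Taylor

theorem exact_TR_Newton_radius_lower_bound_general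
    (n : ℕ) (f : EuclideanSpace ℝ (Fin n) → ℝ)
    (g : EuclideanSpace ℝ (Fin n) → EuclideanSpace ℝ (Fin n))
    (Hess : EuclideanSpace ℝ (Fin n) → EuclideanSpace ℝ (Fin n) →L[ℝ] EuclideanSpace ℝ (Fin n))
    (L_H εH γ₁ γ₂ ψ η δ₀ δ_max : ℝ)
    (hgrad : ∀ x, HasGradientAt f (g x) x)
    (hHess : ∀ x, HasFDerivAt g (Hess x) x)
    (hL : 0 < L_H)
    (hLip : ∀ x y, ‖Hess x - Hess y‖ ≤ L_H * ‖x - y‖)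
    (hγ₁ : γ₁ ∈ Set.Ioo (0 : ℝ) 1) (hγ₂ : 1 ≤ γ₂)
    (hη : η ∈ Set.Ioo (0 : ℝ) 1) (hδ₀max : δ₀ ≤ δ_max)
    (K : ℕ)
    (x s : ℕ → EuclideanSpace ℝ (Fin n)) (δ : ℕ → ℝ)
    (hδinit : δ 0 = δ₀)
    -- exact solution of the regularized trust-region subproblem
    (hfeas : ∀ k < K, ‖s k‖ ≤ δ k)
    (hopt : ∀ k < K, ∀ u, ‖u‖ ≤ δ k →
      ⟪g (x k), s k⟫ + (1 / 2) * ⟪s k, Hess (x k) (s k)⟫ + (1 / 2) * εH * ‖s k‖ ^ 2 ≤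
      ⟪g (x k), u⟫ + (1 / 2) * ⟪u, Hess (x k) u⟫ + (1 / 2) * εH * ‖u‖ ^ 2)
    -- update on successful iterations
    (hsucc : ∀ k < K,
      f (x k) - f (x k + s k) ≥
          η * (-⟪g (x k), s k⟫ - (1 / 2) * ⟪s k, Hess (x k) (s k)⟫) →
        x (k + 1) = x k + s k ∧
        δ (k + 1) = if ‖s k‖ ≥ ψ * δ k then min (γ₂ * δ k) δ_max else δ k)
    -- update on unsuccessful iterations
    (hunsucc : ∀ k < K,
      ¬ (f (x k) - f (x k + s k) ≥
          η * (-⟪g (x k), s k⟫ - (1 / 2) * ⟪s k, Hess (x k) (s k)⟫)) →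
        x (k + 1) = x k ∧ δ (k + 1) = γ₁ * ‖s k‖) :
    (∀ k < K,
      ¬ (f (x k) - f (x k + s k) ≥
          η * (-⟪g (x k), s k⟫ - (1 / 2) * ⟪s k, Hess (x k) (s k)⟫)) →
        ‖s k‖ > 3 * (1 - η) * εH / L_H ∧ δ k > 3 * (1 - η) * εH / L_H) ∧
    (∀ k ≤ K, δ k ≥ min δ₀ (3 * γ₁ * (1 - η) * εH / L_H)) := by
  have hδ_nonneg : ∀ k < K, 0 ≤ δ k := fun k hk => (norm_nonneg _).trans (hfeas k hk)
  have hstep : ∀ k < K, ¬ (f (x k) - f (x k + s k) ≥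
      η * (-⟪g (x k), s k⟫ - (1 / 2) * ⟪s k, Hess (x k) (s k)⟫)) →
      3 * (1 - η) * εH / L_H < ‖s k‖ := fun k hk hfail =>
    lt_norm_of_not_sufficient_decrease hgrad hHess hLip hL hη.2.le (hδ_nonneg k hk) (hopt k hk)
      hfail
  refine ⟨fun k hk hfail => ⟨hstep k hk hfail, (hstep k hk hfail).trans_le (hfeas k hk)⟩,
    fun k hk => ?_⟩
  induction k with
  | zero => exact hδinit ▸ min_le_left _ _
  | succ k ih =>
    have ihk := ih (by omega)
    by_cases hdec : f (x k) - f (x k + s k) ≥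
        η * (-⟪g (x k), s k⟫ - (1 / 2) * ⟪s k, Hess (x k) (s k)⟫)
    · rw [(hsucc k hk hdec).2]
      split_ifs
      · exact le_min (ihk.trans (le_mul_of_one_le_left (hδ_nonneg k hk) hγ₂))
          ((min_le_left _ _).trans hδ₀max)
      · exact ihk
    · rw [(hunsucc k hk hdec).2]
      calc min δ₀ (3 * γ₁ * (1 - η) * εH / L_H)
          ≤ γ₁ * (3 * (1 - η) * εH / L_H) := (min_le_right _ _).trans_eq (by ring)
        _ ≤ γ₁ * ‖s k‖ := mul_le_mul_of_nonneg_left (hstep k hk hdec).le hγ₁.1.le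

/-- Lemma 2.2 of the paper: lower bound on the trust-region radii generated by the exact
regularized trust-region Newton method.  (a) Every unsuccessful iteration `k < K` has
`‖s k‖ > 3(1-η)εH/L_H` (hence `δ k > 3(1-η)εH/L_H`); (b) `δ k ≥ min{δ₀, 3γ₁(1-η)εH/L_H}`
for every `k ≤ K`. -/
theorem exact_TR_Newton_radius_lower_bound
    (n : ℕ) (f : EuclideanSpace ℝ (Fin n) → ℝ)
    (g : EuclideanSpace ℝ (Fin n) → EuclideanSpace ℝ (Fin n))
    (Hess : EuclideanSpace ℝ (Fin n) → EuclideanSpace ℝ (Fin n) →L[ℝ] EuclideanSpace ℝ (Fin n))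
    (f_low L_H εg εH γ₁ γ₂ ψ η δ₀ δ_max : ℝ)
    (hC2 : ContDiff ℝ 2 f)
    (hgrad : ∀ x, HasGradientAt f (g x) x)
    (hHess : ∀ x, HasFDerivAt g (Hess x) x)
    (hsym : ∀ x u v, ⟪Hess x u, v⟫ = ⟪u, Hess x v⟫)
    (hlow : ∀ x, f x ≥ f_low)
    (hL : 0 < L_H)
    (hLip : ∀ x y, ‖Hess x - Hess y‖ ≤ L_H * ‖x - y‖)
    (hεg : 0 < εg) (hεH : 0 < εH)
    (hγ₁ : γ₁ ∈ Set.Ioo (0 : ℝ) 1) (hγ₂ : 1 ≤ γ₂) (hψ : ψ ∈ Set.Ioc (1 / γ₂) 1)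
    (hη : η ∈ Set.Ioo (0 : ℝ) 1) (hδ₀ : 0 < δ₀) (hδ₀max : δ₀ ≤ δ_max)
    (K : ℕ)
    (x s : ℕ → EuclideanSpace ℝ (Fin n)) (δ : ℕ → ℝ)
    (hδinit : δ 0 = δ₀)
    -- non-termination: at every iteration, the current point is not (εg,εH)-stationary
    (hnonterm : ∀ k < K, ‖g (x k)‖ > εg ∨ ∃ v, ‖v‖ = 1 ∧ ⟪v, Hess (x k) v⟫ < -εH)
    -- exact solution of the regularized trust-region subproblem
    (hfeas : ∀ k < K, ‖s k‖ ≤ δ k)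
    (hopt : ∀ k < K, ∀ u, ‖u‖ ≤ δ k →
      ⟪g (x k), s k⟫ + (1 / 2) * ⟪s k, Hess (x k) (s k)⟫ + (1 / 2) * εH * ‖s k‖ ^ 2 ≤
      ⟪g (x k), u⟫ + (1 / 2) * ⟪u, Hess (x k) u⟫ + (1 / 2) * εH * ‖u‖ ^ 2)
    -- update on successful iterations
    (hsucc : ∀ k < K,
      f (x k) - f (x k + s k) ≥
          η * (-⟪g (x k), s k⟫ - (1 / 2) * ⟪s k, Hess (x k) (s k)⟫) →
        x (k + 1) = x k + s k ∧
        δ (k + 1) = if ‖s k‖ ≥ ψ * δ k then min (γ₂ * δ k) δ_max else δ k)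
    -- update on unsuccessful iterations
    (hunsucc : ∀ k < K,
      ¬ (f (x k) - f (x k + s k) ≥
          η * (-⟪g (x k), s k⟫ - (1 / 2) * ⟪s k, Hess (x k) (s k)⟫)) →
        x (k + 1) = x k ∧ δ (k + 1) = γ₁ * ‖s k‖) :
    (∀ k < K,
      ¬ (f (x k) - f (x k + s k) ≥
          η * (-⟪g (x k), s k⟫ - (1 / 2) * ⟪s k, Hess (x k) (s k)⟫)) →
        ‖s k‖ > 3 * (1 - η) * εH / L_H ∧ δ k > 3 * (1 - η) * εH / L_H) ∧
    (∀ k ≤ K, δ k ≥ min δ₀ (3 * γ₁ * (1 - η) * εH / L_H)) :=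
  exact_TR_Newton_radius_lower_bound_general n f g Hess L_H εH γ₁ γ₂ ψ η δ₀ δ_max hgrad hHess hL
    hLip hγ₁ hγ₂ hη hδ₀max K x s δ hδinit hfeas hopt hsucc hunsucc
end
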